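/- arXiv:2305.08791 — 2 statements merged into one kernel-verified Lean document; each statement's English description precedes it below -/
import Mathlib

section
/- For all real numbers x, y with 0 < y < x ≤ 1, one has |x·ln x − y·ln y| ≤ 4·√(x − y) + (x − y). -/
/-- Modulus-of-continuity bound for `t ↦ t · ln t` on `(0, 1]`:
`|x ln x − y ln y| ≤ 4 √(x − y) + (x − y)` for `0 < y < x ≤ 1`. -/
theorem abs_mul_log_sub_mul_log_le (x y : ℝ) (hy : 0 < y) (hyx : y < x) (hx : x ≤ 1) :
    |x * Real.log x - y * Real.log y| ≤ 4 * Real.sqrt (x - y) + (x - y) := by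
  have hx0 : 0 < x := hy.trans hyx
  have hd : 0 < x - y := sub_pos.2 hyx
  have hsx : 0 < Real.sqrt x := Real.sqrt_pos.2 hx0
  have hsd : 0 < Real.sqrt (x - y) := Real.sqrt_pos.2 hd
  have hsds : Real.sqrt (x - y) * Real.sqrt (x - y) = x - y := Real.mul_self_sqrt hd.le
  have hts : Real.sqrt (x - y) ≤ Real.sqrt x := Real.sqrt_le_sqrt (by linarith)
  have hlx : Real.log x ≤ 0 := Real.log_nonpos hx0.le hx
  -- key: sqrt x * (- log x) ≤ 2
  have hkey : Real.sqrt x * (-Real.log x) ≤ 2 := by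
    have h1 : Real.log (1 / Real.sqrt x) ≤ 1 / Real.sqrt x - 1 :=
      Real.log_le_sub_one_of_pos (by positivity)
    have h2 : Real.log (1 / Real.sqrt x) = -(Real.log x / 2) := by
      rw [Real.log_div one_ne_zero (ne_of_gt hsx), Real.log_one, Real.log_sqrt hx0.le]
      ring
    rw [h2] at h1
    have h3 : Real.sqrt x * (-(Real.log x / 2)) ≤ Real.sqrt x * (1 / Real.sqrt x - 1) := by
      exact mul_le_mul_of_nonneg_left h1 hsx.le
    have h4 : Real.sqrt x * (1 / Real.sqrt x) = 1 := mul_one_div_cancel (ne_of_gt hsx)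
    nlinarith [hsx]
  -- first term bound: (x - y) * (- log x) ≤ 2 * sqrt (x - y)
  have hterm1 : (x - y) * (-Real.log x) ≤ 2 * Real.sqrt (x - y) := by
    nlinarith [mul_le_mul_of_nonneg_right hts (neg_nonneg.2 hlx),
      mul_le_mul_of_nonneg_left hkey hsd.le, mul_pos hsd hsd]
  -- second term bound: 0 ≤ y * (log x - log y) ≤ x - y
  have hterm2a : 0 ≤ y * (Real.log x - Real.log y) := by
    have := Real.log_le_log hy hyx.le
    nlinarith
  have hterm2b : y * (Real.log x - Real.log y) ≤ x - y := by
    have h1 : Real.log (x / y) ≤ x / y - 1 := Real.log_le_sub_one_of_pos (by positivity)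
    have h2 : Real.log (x / y) = Real.log x - Real.log y :=
      Real.log_div (ne_of_gt hx0) (ne_of_gt hy)
    rw [h2] at h1
    have h3 := mul_le_mul_of_nonneg_left h1 hy.le
    have h4 : y * (x / y - 1) = x - y := by field_simp
    linarith
  have hdecomp : x * Real.log x - y * Real.log y =
      (x - y) * Real.log x + y * (Real.log x - Real.log y) := by ring
  rw [abs_le]
  constructor
  · have h1 : -(2 * Real.sqrt (x - y)) ≤ (x - y) * Real.log x := by linarith
    nlinarith [hsd.le]
  · have h1 : (x - y) * Real.log x ≤ 0 := mul_nonpos_of_nonneg_of_nonpos hd.le hlx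
    nlinarith [hsd.le]
end

section
/- Let n ≥ 1 and let Ψ be an n × n real matrix with 0 ≤ Ψ_{ij} ≤ 1 for all i, j and Ψ_{ii} = 0 for all i, and let s ∈ ℝ^n with 0 ≤ s_i ≤ 1 for all i. Define recursively: u^{(0)} = s, c^{(0)} = 0, and for t ≥ 1, c^{(t)}_i = 1 − ∏_{r=0}^{t−1} ∏_{j=1}^n (1 − Ψ_{ij}·u^{(r)}_j) and u^{(t)} = c^{(t)} − c^{(t−1)}. Then for every t ≥ 0 and every i: (a) 0 ≤ u^{(t)}_i and c^{(t)}_i ≤ c^{(t+1)}_i ≤ 1; (b) u^{(t)}_i ≤ (Ψ^t s)_i; and (c) c^{(t)}_i ≤ ∑_{r=1}^{t} (Ψ^r s)_i. -/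
private lemma weier {ι : Type*} (S : Finset ι) (f : ι → ℝ)
    (h : ∀ i ∈ S, 0 ≤ f i ∧ f i ≤ 1) :
    1 - ∏ i ∈ S, (1 - f i) ≤ ∑ i ∈ S, f i := by
  classical
  induction S using Finset.induction_on with
  | empty => simp
  | @insert a S ha ih =>
    have ha' := h a (Finset.mem_insert_self a S)
    have hS : ∀ i ∈ S, 0 ≤ f i ∧ f i ≤ 1 := fun i hi =>
      h i (Finset.mem_insert_of_mem hi)
    have ih' := ih hS
    have hP0 : (0:ℝ) ≤ ∏ i ∈ S, (1 - f i) :=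
      Finset.prod_nonneg fun i hi => by linarith [(hS i hi).2]
    have hP1 : (∏ i ∈ S, (1 - f i)) ≤ 1 :=
      Finset.prod_le_one (fun i hi => by linarith [(hS i hi).2])
        (fun i hi => by linarith [(hS i hi).1])
    rw [Finset.prod_insert ha, Finset.sum_insert ha]
    nlinarith [ha'.1, ha'.2]

/-- The linear (first-order Taylor) approximation `Ψᵗ s` overestimates the exact
activation probabilities of the independent cascade recursion. Here `c t i` is the exact
cumulative activation probability of node `i` by time `t` (with `c 0 = 0`), and
`u t i = c t i − c (t−1) i` (with `u 0 = s`) is the probability of activation exactly at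
time `t`, defined through the product recursion
`c t i = 1 − ∏_{r<t} ∏_j (1 − Ψᵢⱼ u r j)`. -/
theorem linear_approx_overestimates_cascade (n : ℕ) (hn : 1 ≤ n)
    (Ψ : Matrix (Fin n) (Fin n) ℝ)
    (hΨ : ∀ i j, 0 ≤ Ψ i j ∧ Ψ i j ≤ 1) (hdiag : ∀ i, Ψ i i = 0)
    (s : Fin n → ℝ) (hs : ∀ i, 0 ≤ s i ∧ s i ≤ 1)
    (u c : ℕ → Fin n → ℝ)
    (hu0 : u 0 = s) (hc0 : c 0 = 0)
    (hc : ∀ t, 1 ≤ t → ∀ i,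
      c t i = 1 - ∏ r ∈ Finset.range t, ∏ j, (1 - Ψ i j * u r j))
    (hu : ∀ t, 1 ≤ t → ∀ i, u t i = c t i - c (t - 1) i) :
    ∀ t, ∀ i,
      (0 ≤ u t i ∧ c t i ≤ c (t + 1) i ∧ c (t + 1) i ≤ 1)
      ∧ u t i ≤ (Ψ ^ t).mulVec s i
      ∧ c t i ≤ ∑ r ∈ Finset.Icc 1 t, (Ψ ^ r).mulVec s i := by
  classical
  set P : ℕ → Fin n → ℝ := fun t i => ∏ r ∈ Finset.range t, ∏ j, (1 - Ψ i j * u r j)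
    with hPdef
  have hcP : ∀ t i, c t i = 1 - P t i := by
    intro t i
    rcases Nat.eq_zero_or_pos t with h | h
    · subst h; simp [hc0, hPdef]
    · exact hc t h i
  -- 0 ≤ u t j ≤ 1
  have hu01 : ∀ t j, 0 ≤ u t j ∧ u t j ≤ 1 := by
    intro t
    induction t using Nat.strong_induction_on with
    | _ t ih =>
      match t with
      | 0 => intro j; simpa [hu0] using hs j
      | Nat.succ m =>
        have hfac : ∀ r, r ≤ m → ∀ i j, 0 ≤ 1 - Ψ i j * u r j ∧ 1 - Ψ i j * u r j ≤ 1 := by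
          intro r hr i j
          have h1 := (hΨ i j).1
          have h2 := (hΨ i j).2
          have h3 := (ih r (Nat.lt_succ_of_le hr) j).1
          have h4 := (ih r (Nat.lt_succ_of_le hr) j).2
          constructor
          · nlinarith
          · nlinarith
        have hQ : ∀ r, r ≤ m → ∀ i, 0 ≤ ∏ j, (1 - Ψ i j * u r j) ∧
            (∏ j, (1 - Ψ i j * u r j)) ≤ 1 := by
          intro r hr i
          exact ⟨Finset.prod_nonneg fun j _ => (hfac r hr i j).1,
            Finset.prod_le_one (fun j _ => (hfac r hr i j).1)
              (fun j _ => (hfac r hr i j).2)⟩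
        have hP01 : ∀ k, k ≤ m + 1 → ∀ i, 0 ≤ P k i ∧ P k i ≤ 1 := by
          intro k hk i
          constructor
          · exact Finset.prod_nonneg fun r hr =>
              (hQ r (by have := Finset.mem_range.mp hr; omega) i).1
          · exact Finset.prod_le_one
              (fun r hr => (hQ r (by have := Finset.mem_range.mp hr; omega) i).1)
              (fun r hr => (hQ r (by have := Finset.mem_range.mp hr; omega) i).2)
        intro i
        have husucc : u (m + 1) i = P m i * (1 - ∏ j, (1 - Ψ i j * u m j)) := by
          have h1 := hu (m + 1) (by omega) i
          simp only [Nat.add_sub_cancel] at h1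
          rw [h1, hcP (m + 1) i, hcP m i]
          have h2 : P (m + 1) i = P m i * ∏ j, (1 - Ψ i j * u m j) := by
            simp [hPdef, Finset.prod_range_succ]
          rw [h2]; ring
        have hPm := hP01 m (by omega) i
        have hQm := hQ m le_rfl i
        rw [husucc]
        constructor
        · nlinarith [hPm.1, hPm.2, hQm.1, hQm.2]
        · nlinarith [hPm.1, hPm.2, hQm.1, hQm.2]
  -- factor facts globally
  have hfac : ∀ r i j, 0 ≤ 1 - Ψ i j * u r j ∧ 1 - Ψ i j * u r j ≤ 1 := by
    intro r i j
    have h1 := (hΨ i j).1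
    have h2 := (hΨ i j).2
    have h3 := (hu01 r j).1
    have h4 := (hu01 r j).2
    exact ⟨by nlinarith, by nlinarith⟩
  have hQ : ∀ r i, 0 ≤ ∏ j, (1 - Ψ i j * u r j) ∧ (∏ j, (1 - Ψ i j * u r j)) ≤ 1 :=
    fun r i => ⟨Finset.prod_nonneg fun j _ => (hfac r i j).1,
      Finset.prod_le_one (fun j _ => (hfac r i j).1) (fun j _ => (hfac r i j).2)⟩
  have hP01 : ∀ k i, 0 ≤ P k i ∧ P k i ≤ 1 := fun k i =>
    ⟨Finset.prod_nonneg fun r _ => (hQ r i).1,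
     Finset.prod_le_one (fun r _ => (hQ r i).1) (fun r _ => (hQ r i).2)⟩
  have husucc : ∀ m i, u (m + 1) i = P m i * (1 - ∏ j, (1 - Ψ i j * u m j)) := by
    intro m i
    have h1 := hu (m + 1) (by omega) i
    simp only [Nat.add_sub_cancel] at h1
    rw [h1, hcP (m + 1) i, hcP m i]
    have h2 : P (m + 1) i = P m i * ∏ j, (1 - Ψ i j * u m j) := by
      simp [hPdef, Finset.prod_range_succ]
    rw [h2]; ring
  -- part b
  have hb : ∀ t i, u t i ≤ (Ψ ^ t).mulVec s i := by
    intro t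
    induction t with
    | zero => intro i; simp [hu0, Matrix.one_mulVec]
    | succ m ihm =>
      intro i
      have key : u (m + 1) i ≤ ∑ j, Ψ i j * u m j := by
        rw [husucc m i]
        have hmem : ∀ j, 0 ≤ Ψ i j * u m j ∧ Ψ i j * u m j ≤ 1 := fun j =>
          ⟨mul_nonneg (hΨ i j).1 (hu01 m j).1,
           mul_le_one₀ (hΨ i j).2 (hu01 m j).1 (hu01 m j).2⟩
        have hw := weier Finset.univ (fun j => Ψ i j * u m j) (fun j _ => hmem j)
        have hPm := hP01 m i
        have hQm := hQ m i
        calc P m i * (1 - ∏ j, (1 - Ψ i j * u m j))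
            ≤ 1 * (1 - ∏ j, (1 - Ψ i j * u m j)) := by nlinarith [hPm.1, hPm.2, hQm.2]
          _ = 1 - ∏ j, (1 - Ψ i j * u m j) := by ring
          _ ≤ ∑ j, Ψ i j * u m j := hw
      have step : ∑ j, Ψ i j * u m j ≤ (Ψ ^ (m + 1)).mulVec s i := by
        have hps : (Ψ ^ (m + 1)).mulVec s = Ψ.mulVec ((Ψ ^ m).mulVec s) := by
          rw [pow_succ', Matrix.mulVec_mulVec]
        rw [hps]
        simp only [Matrix.mulVec, dotProduct]
        exact Finset.sum_le_sum fun j _ =>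
          mul_le_mul_of_nonneg_left (ihm j) (hΨ i j).1
      exact key.trans step
  intro t i
  refine ⟨⟨(hu01 t i).1, ?_, ?_⟩, hb t i, ?_⟩
  · have h1 := hu (t + 1) (by omega) i
    simp only [Nat.add_sub_cancel] at h1
    have h0 := (hu01 (t + 1) i).1
    linarith
  · rw [hcP (t + 1) i]
    linarith [(hP01 (t + 1) i).1]
  · induction t with
    | zero => simp [hc0]
    | succ m ihm =>
      have hstep : c (m + 1) i = c m i + u (m + 1) i := by
        have h1 := hu (m + 1) (by omega) i
        simp only [Nat.add_sub_cancel] at h1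
        linarith
      rw [hstep, Finset.sum_Icc_succ_top (by omega : 1 ≤ m + 1)]
      have h2 := hb (m + 1) i
      linarith
end
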